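/- arXiv:1902.11059 — 2 statements merged into one kernel-verified Lean document; each statement's English description precedes it below -/
import Mathlib

section
/- For any invertible matrices $A, B \in GL_{d+1}(\mathbb{R})$ and any unit vector $x \in \mathbb{R}^{d+1}$, one has $\left\| \frac{Ax}{\|Ax\|} - \frac{Bx}{\|Bx\|} \right\| \leq \|A^{-1}\| (1 + \|B\| \|B^{-1}\|) \|A - B\|$. -/
/-!
Write `Ax/‖Ax‖ - Bx/‖Bx‖ = (Ax - Bx)/‖Ax‖ + (1/‖Ax‖ - 1/‖Bx‖) Bx`. By the reverse triangle
inequality both terms have norm at most `‖Ax - Bx‖/‖Ax‖ ≤ ‖A - B‖ ‖A⁻¹‖`, since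
`1 = ‖A⁻¹Ax‖ ≤ ‖A⁻¹‖ ‖Ax‖`. The resulting factor `2` is at most `1 + ‖B‖ ‖B⁻¹‖`,
because `1 = ‖BB⁻¹‖ ≤ ‖B‖ ‖B⁻¹‖`.
-/

open ContinuousLinearMap

theorem Units.one_le_norm_mul_norm_inv {R : Type*} [SeminormedRing R] [NormOneClass R]
    (u : Rˣ) : 1 ≤ ‖(u : R)‖ * ‖(↑u⁻¹ : R)‖ := by
  simpa using norm_mul_le (u : R) ↑u⁻¹

theorem ContinuousLinearMap.norm_le_norm_units_inv_mul_norm_apply {𝕜 E : Type*}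
    [NontriviallyNormedField 𝕜] [SeminormedAddCommGroup E] [NormedSpace 𝕜 E]
    (U : (E →L[𝕜] E)ˣ) (x : E) : ‖x‖ ≤ ‖(↑U⁻¹ : E →L[𝕜] E)‖ * ‖(U : E →L[𝕜] E) x‖ :=
  calc ‖x‖ = ‖(↑U⁻¹ : E →L[𝕜] E) ((U : E →L[𝕜] E) x)‖ := by
        rw [← mul_apply_eq_comp, U.inv_mul, one_apply_eq_self]
    _ ≤ _ := le_opNorm _ _

section

variable {E : Type*} [NormedAddCommGroup E] [NormedSpace ℝ E]

theorem norm_inv_norm_smul_sub_inv_norm_smul_le {a : E} (ha : a ≠ 0) (b : E) :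
    ‖‖a‖⁻¹ • a - ‖b‖⁻¹ • b‖ ≤ 2 * ‖a - b‖ / ‖a‖ := by
  rcases eq_or_ne b 0 with rfl | hb
  · simp [norm_smul, ha]
  have hab : ‖a - b‖ / ‖a‖ = ‖a‖⁻¹ * ‖a - b‖ := div_eq_inv_mul _ _
  have hrescale : ‖(‖a‖⁻¹ - ‖b‖⁻¹) • b‖ ≤ ‖a - b‖ / ‖a‖ := by
    have hcoeff : (‖a‖⁻¹ - ‖b‖⁻¹) * ‖b‖ = (‖b‖ - ‖a‖) / ‖a‖ := by
      field_simp [norm_ne_zero_iff.2 ha, norm_ne_zero_iff.2 hb]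
    rw [norm_smul, Real.norm_eq_abs, ← abs_norm b, ← abs_mul, abs_norm, hcoeff, abs_div,
      abs_norm, norm_sub_rev]
    gcongr
    exact abs_norm_sub_norm_le b a
  calc ‖‖a‖⁻¹ • a - ‖b‖⁻¹ • b‖ = ‖‖a‖⁻¹ • (a - b) + (‖a‖⁻¹ - ‖b‖⁻¹) • b‖ := by
        rw [smul_sub, sub_smul, sub_add_sub_cancel]
    _ ≤ ‖a - b‖ / ‖a‖ + ‖a - b‖ / ‖a‖ :=
        norm_add_le_of_le (by rw [norm_smul, norm_inv, norm_norm, hab]) hrescale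
    _ = 2 * ‖a - b‖ / ‖a‖ := by ring

theorem norm_inv_norm_smul_apply_sub_le (A B : (E →L[ℝ] E)ˣ) {x : E} (hx : ‖x‖ = 1) :
    ‖‖(A : E →L[ℝ] E) x‖⁻¹ • (A : E →L[ℝ] E) x - ‖(B : E →L[ℝ] E) x‖⁻¹ • (B : E →L[ℝ] E) x‖ ≤
      ‖(↑A⁻¹ : E →L[ℝ] E)‖ * (1 + ‖(B : E →L[ℝ] E)‖ * ‖(↑B⁻¹ : E →L[ℝ] E)‖) *
        ‖(A : E →L[ℝ] E) - B‖ := by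
  -- gives `NormOneClass (E →L[ℝ] E)`, needed for `1 ≤ ‖B‖ ‖B⁻¹‖`
  have : Nontrivial E := nontrivial_of_ne x 0 (by rintro rfl; simp at hx)
  set a := (A : E →L[ℝ] E) x
  have ha : 1 ≤ ‖(↑A⁻¹ : E →L[ℝ] E)‖ * ‖a‖ := hx ▸ norm_le_norm_units_inv_mul_norm_apply A x
  have ha0 : a ≠ 0 := by
    rintro h
    norm_num [h] at ha
  have hdiff : ‖a - (B : E →L[ℝ] E) x‖ ≤ ‖(A : E →L[ℝ] E) - B‖ := by
    simpa [hx] using ((A : E →L[ℝ] E) - B).le_opNorm x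
  calc _ ≤ 2 * ‖a - (B : E →L[ℝ] E) x‖ / ‖a‖ := norm_inv_norm_smul_sub_inv_norm_smul_le ha0 _
    _ ≤ ‖(↑A⁻¹ : E →L[ℝ] E)‖ * (1 + 1) * ‖(A : E →L[ℝ] E) - B‖ := by
        rw [div_le_iff₀ (norm_pos_iff.2 ha0)]
        nlinarith [norm_nonneg ((A : E →L[ℝ] E) - B)]
    _ ≤ _ := by
        gcongr
        exact B.one_le_norm_mul_norm_inv

end

/-- For invertible `A, B ∈ GL_{d+1}(ℝ)` (realized as units of the ring of
continuous linear endomorphisms of Euclidean space) and a unit vector `x`,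
`‖Ax/‖Ax‖ - Bx/‖Bx‖‖ ≤ ‖A⁻¹‖ (1 + ‖B‖‖B⁻¹‖) ‖A - B‖`. -/
theorem norm_normalized_action_sub_le
    (d : ℕ)
    (A B : (EuclideanSpace ℝ (Fin (d + 1)) →L[ℝ] EuclideanSpace ℝ (Fin (d + 1)))ˣ)
    (x : EuclideanSpace ℝ (Fin (d + 1))) (hx : ‖x‖ = 1) :
    ‖(‖(A : EuclideanSpace ℝ (Fin (d + 1)) →L[ℝ] EuclideanSpace ℝ (Fin (d + 1))) x‖⁻¹ •
        (A : EuclideanSpace ℝ (Fin (d + 1)) →L[ℝ] EuclideanSpace ℝ (Fin (d + 1))) x) -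
      (‖(B : EuclideanSpace ℝ (Fin (d + 1)) →L[ℝ] EuclideanSpace ℝ (Fin (d + 1))) x‖⁻¹ •
        (B : EuclideanSpace ℝ (Fin (d + 1)) →L[ℝ] EuclideanSpace ℝ (Fin (d + 1))) x)‖ ≤
      ‖((A⁻¹ : _ˣ) : EuclideanSpace ℝ (Fin (d + 1)) →L[ℝ] EuclideanSpace ℝ (Fin (d + 1)))‖ *
        (1 + ‖(B : EuclideanSpace ℝ (Fin (d + 1)) →L[ℝ] EuclideanSpace ℝ (Fin (d + 1)))‖ *
          ‖((B⁻¹ : _ˣ) : EuclideanSpace ℝ (Fin (d + 1)) →L[ℝ] EuclideanSpace ℝ (Fin (d + 1)))‖) *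
        ‖(A : EuclideanSpace ℝ (Fin (d + 1)) →L[ℝ] EuclideanSpace ℝ (Fin (d + 1))) -
          (B : EuclideanSpace ℝ (Fin (d + 1)) →L[ℝ] EuclideanSpace ℝ (Fin (d + 1)))‖ :=
  norm_inv_norm_smul_apply_sub_le A B hx
end

section
/- Let $\Lambda$ be a finite alphabet, and for each $i \in \Lambda$ let $A_i \in GL_{d+1}(\mathbb{R})$. Set $C_1 = \max_i \max\{1, \|A_i\|\}$ and $C_2 = \max_i \max\{1, \|A_i^{-1}\|\}$. Suppose there exist $c \in (0,1)$ and a unit vector $x \in \mathbb{R}^{d+1}$ such that for all $n$ and all words $\mathbf{u}, \mathbf{v} \in \Lambda^n$ with $u_1 \neq v_1$, $\left\| \frac{A_{\mathbf{u}} x}{\|A_{\mathbf{u}} x\|} - \frac{A_{\mathbf{v}} x}{\|A_{\mathbf{v}} x\|} \right\| \geq c^n$. Then for all $n$ and all distinct words $\mathbf{i}, \mathbf{j} \in \Lambda^n$, $\|A_{\mathbf{i}} - A_{\mathbf{j}}\| \geq (2^{-1} C_1^{-1} C_2^{-3} c)^n$; in particular the family $\{A_i\}$ is strongly Diophantine.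 -/
/-- Product of group elements along a word: `wordProd A [i₁,…,iₙ] = A i₁ * ⋯ * A iₙ`. -/
def wordProd {Λ M : Type*} [Monoid M] (A : Λ → M) (l : List Λ) : M :=
  (l.map A).prod

/-!
Split two distinct words of equal length at their first difference, `i = w u` and `j = w v`.
Multiplying `A_i - A_j` on the left by `A_w⁻¹` costs at most `C₂ ^ |w|`, and the normalized image
of a unit vector moves by at most `2 ‖A_u⁻¹‖ ‖A_u - A_v‖` when `A_u` is replaced by `A_v`. The
separation hypothesis on the tails therefore gives `c ^ |u| ≤ 2 C₂ ^ n ‖A_i - A_j‖`, and since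
`|u| ≥ 1` this bound dominates `(2⁻¹ C₁⁻¹ C₂⁻³ c) ^ n`.
-/

section WordProd

variable {Λ : Type*}

theorem wordProd_append {M : Type*} [Monoid M] (A : Λ → M) (l₁ l₂ : List Λ) :
    wordProd A (l₁ ++ l₂) = wordProd A l₁ * wordProd A l₂ := by
  simp [wordProd]

theorem Units.val_wordProd {M : Type*} [Monoid M] (A : Λ → Mˣ) (l : List Λ) :
    (↑(wordProd A l) : M) = wordProd (fun i => (A i : M)) l := by
  simp [wordProd, ← Units.coeHom_apply, map_list_prod, Function.comp_def]

theorem wordProd_inv {G : Type*} [Group G] (A : Λ → G) (l : List Λ) :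
    (wordProd A l)⁻¹ = wordProd (fun i => (A i)⁻¹) l.reverse := by
  simp [wordProd, List.prod_inv_reverse, Function.comp_def]

variable {R : Type*} [SeminormedRing R] [NormOneClass R]

theorem norm_wordProd_le (A : Λ → R) {C : ℝ} (hA : ∀ i, ‖A i‖ ≤ C) (l : List Λ) :
    ‖wordProd A l‖ ≤ C ^ l.length := by
  induction l with
  | nil => simp [wordProd]
  | cons a l ih =>
    calc ‖wordProd A (a :: l)‖ = ‖A a * wordProd A l‖ := by simp [wordProd]
      _ ≤ ‖A a‖ * ‖wordProd A l‖ := norm_mul_le _ _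
      _ ≤ C * C ^ l.length := by gcongr; exacts [(norm_nonneg _).trans (hA a), hA a]
      _ = C ^ (a :: l).length := by rw [List.length_cons, pow_succ']

theorem norm_inv_wordProd_le (A : Λ → Rˣ) {C : ℝ} (hA : ∀ i, ‖(↑(A i)⁻¹ : R)‖ ≤ C)
    (l : List Λ) : ‖(↑(wordProd A l)⁻¹ : R)‖ ≤ C ^ l.length := by
  simpa [wordProd_inv, Units.val_wordProd] using
    norm_wordProd_le (fun i => (↑(A i)⁻¹ : R)) hA l.reverse

end WordProd

theorem List.exists_common_prefix_of_ne {α : Type*} {l₁ l₂ : List α}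
    (hlen : l₁.length = l₂.length) (hne : l₁ ≠ l₂) :
    ∃ w u v : List α, l₁ = w ++ u ∧ l₂ = w ++ v ∧ u.length = v.length ∧ u.head? ≠ v.head? := by
  induction l₁ generalizing l₂ with
  | nil => cases l₂ with
    | nil => exact absurd rfl hne
    | cons => simp at hlen
  | cons a l₁ ih => cases l₂ with
    | nil => simp at hlen
    | cons b l₂ =>
      by_cases hab : a = b
      · subst hab
        obtain ⟨w, u, v, rfl, rfl, huv, hhead⟩ := ih (by simpa using hlen) (by simpa using hne)
        exact ⟨a :: w, u, v, rfl, rfl, huv, hhead⟩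
      · exact ⟨[], _, _, rfl, rfl, hlen, by simpa⟩

theorem norm_sub_le_norm_inv_mul_norm_mul_sub {R : Type*} [SeminormedRing R] (w : Rˣ) (a b : R) :
    ‖a - b‖ ≤ ‖(↑w⁻¹ : R)‖ * ‖w * a - w * b‖ := by
  calc ‖a - b‖ = ‖(↑w⁻¹ : R) * (w * a - w * b)‖ := by
        rw [mul_sub, Units.inv_mul_cancel_left, Units.inv_mul_cancel_left]
    _ ≤ _ := norm_mul_le _ _

section Normalize

open NormedSpace

variable {E : Type*} [NormedAddCommGroup E] [NormedSpace ℝ E]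

theorem norm_normalize_sub_normalize_le {a : E} (ha : a ≠ 0) (b : E) :
    ‖normalize a - normalize b‖ ≤ 2 * ‖a - b‖ / ‖a‖ := by
  have hscale : ‖(‖a‖⁻¹ - ‖b‖⁻¹) • b‖ ≤ ‖a - b‖ / ‖a‖ := by
    rcases eq_or_ne b 0 with rfl | hb
    · simp only [smul_zero, norm_zero]; positivity
    rw [norm_smul, Real.norm_eq_abs, ← abs_norm b, ← abs_mul, abs_norm,
      show (‖a‖⁻¹ - ‖b‖⁻¹) * ‖b‖ = (‖b‖ - ‖a‖) / ‖a‖ by field_simp, abs_div, abs_norm,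
      norm_sub_rev]
    gcongr
    exact abs_norm_sub_norm_le b a
  calc ‖normalize a - normalize b‖ = ‖‖a‖⁻¹ • (a - b) + (‖a‖⁻¹ - ‖b‖⁻¹) • b‖ := by
        congr 1; simp only [NormedSpace.normalize]; module
    _ ≤ ‖a - b‖ / ‖a‖ + ‖a - b‖ / ‖a‖ :=
        norm_add_le_of_le (by rw [norm_smul, norm_inv, norm_norm, inv_mul_eq_div]) hscale
    _ = 2 * ‖a - b‖ / ‖a‖ := by ring

theorem norm_normalize_apply_sub_le (U : (E →L[ℝ] E)ˣ) (V : E →L[ℝ] E) {x : E} (hx : ‖x‖ = 1) :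
    ‖normalize ((U : E →L[ℝ] E) x) - normalize (V x)‖ ≤
      2 * ‖(↑U⁻¹ : E →L[ℝ] E)‖ * ‖(U : E →L[ℝ] E) - V‖ := by
  have hUx : 1 ≤ ‖(↑U⁻¹ : E →L[ℝ] E)‖ * ‖(U : E →L[ℝ] E) x‖ := by
    calc 1 = ‖(↑(U⁻¹ * U) : E →L[ℝ] E) x‖ := by simp [hx]
      _ = ‖(↑U⁻¹ : E →L[ℝ] E) ((U : E →L[ℝ] E) x)‖ := rfl
      _ ≤ _ := ContinuousLinearMap.le_opNorm _ _
  have hUx₀ : (U : E →L[ℝ] E) x ≠ 0 := by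
    intro h
    simp only [h, norm_zero, mul_zero] at hUx
    linarith
  calc ‖normalize ((U : E →L[ℝ] E) x) - normalize (V x)‖
      ≤ 2 * ‖((U : E →L[ℝ] E) - V) x‖ * ‖(U : E →L[ℝ] E) x‖⁻¹ := by
        simpa only [sub_apply, div_eq_mul_inv] using norm_normalize_sub_normalize_le hUx₀ (V x)
    _ ≤ 2 * ‖(U : E →L[ℝ] E) - V‖ * ‖(↑U⁻¹ : E →L[ℝ] E)‖ := by
        gcongr
        · simpa [hx] using ((U : E →L[ℝ] E) - V).le_opNorm x
        · exact (inv_le_iff_one_le_mul₀ (norm_pos_iff.mpr hUx₀)).mpr hUx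
    _ = _ := by ring

theorem exists_pow_le_two_mul_pow_mul_norm_wordProd_sub [Nontrivial E] {Λ : Type*}
    (A : Λ → (E →L[ℝ] E)ˣ) {C c : ℝ} (hA : ∀ i, ‖(↑(A i)⁻¹ : E →L[ℝ] E)‖ ≤ C) {x : E}
    (hx : ‖x‖ = 1)
    (hsep : ∀ u v : List Λ, u.length = v.length → u.head? ≠ v.head? →
      c ^ u.length ≤ ‖normalize ((↑(wordProd A u) : E →L[ℝ] E) x) -
        normalize ((↑(wordProd A v) : E →L[ℝ] E) x)‖)
    {i j : List Λ} (hlen : i.length = j.length) (hne : i ≠ j) :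
    ∃ m, m ≠ 0 ∧ m ≤ i.length ∧
      c ^ m ≤ 2 * C ^ i.length * ‖(↑(wordProd A i) : E →L[ℝ] E) - ↑(wordProd A j)‖ := by
  obtain ⟨w, u, v, rfl, rfl, huv, hhead⟩ := List.exists_common_prefix_of_ne hlen hne
  have hu : u ≠ [] := by
    rintro rfl
    exact hhead (by rw [List.length_eq_zero_iff.mp huv.symm])
  obtain ⟨a, -⟩ := List.exists_mem_of_ne_nil u hu
  have hC : 0 ≤ C := (norm_nonneg _).trans (hA a)
  refine ⟨u.length, by simpa using hu, by simp, ?_⟩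
  calc c ^ u.length
      ≤ ‖normalize ((↑(wordProd A u) : E →L[ℝ] E) x) -
          normalize ((↑(wordProd A v) : E →L[ℝ] E) x)‖ := hsep u v huv hhead
    _ ≤ 2 * ‖(↑(wordProd A u)⁻¹ : E →L[ℝ] E)‖ *
          ‖(↑(wordProd A u) : E →L[ℝ] E) - ↑(wordProd A v)‖ :=
        norm_normalize_apply_sub_le _ _ hx
    _ ≤ 2 * C ^ u.length * (‖(↑(wordProd A w)⁻¹ : E →L[ℝ] E)‖ *
          ‖(↑(wordProd A (w ++ u)) : E →L[ℝ] E) - ↑(wordProd A (w ++ v))‖) := by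
        gcongr
        · exact norm_inv_wordProd_le A hA u
        · simpa only [wordProd_append, Units.val_mul] using
            norm_sub_le_norm_inv_mul_norm_mul_sub (wordProd A w) _ _
    _ ≤ 2 * C ^ u.length * (C ^ w.length *
          ‖(↑(wordProd A (w ++ u)) : E →L[ℝ] E) - ↑(wordProd A (w ++ v))‖) := by
        gcongr
        exact norm_inv_wordProd_le A hA w
    _ = _ := by rw [List.length_append, pow_add]; ring

end Normalize

theorem pow_le_of_pow_le_two_mul_pow_mul {ρ C c D : ℝ} {m n : ℕ} (hC : 1 ≤ C) (hc : c ≤ 1)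
    (hρ₀ : 0 ≤ ρ) (hρ : ρ ≤ 2⁻¹ * C⁻¹ * c) (hm₀ : m ≠ 0) (hmn : m ≤ n)
    (hD : c ^ m ≤ 2 * C ^ n * D) : ρ ^ n ≤ D := by
  obtain ⟨k, rfl⟩ := Nat.exists_eq_add_of_le' hmn
  have hC₀ : 0 < C := zero_lt_one.trans_le hC
  have hc₀ : 0 ≤ c := (mul_nonneg_iff_of_pos_left (by positivity)).mp (hρ₀.trans hρ)
  have hρC : ρ ≤ C⁻¹ := hρ.trans (by
    calc 2⁻¹ * C⁻¹ * c ≤ 2⁻¹ * C⁻¹ * 1 := by gcongr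
      _ ≤ C⁻¹ := by linarith [inv_pos.mpr hC₀])
  calc ρ ^ (k + m) = ρ ^ k * ρ ^ m := pow_add _ _ _
    _ ≤ C⁻¹ ^ k * (2⁻¹ * C⁻¹ * c) ^ m := by gcongr
    _ = 2⁻¹ ^ m * C⁻¹ ^ (k + m) * c ^ m := by ring
    _ ≤ 2⁻¹ * C⁻¹ ^ (k + m) * c ^ m := by
        gcongr
        exact pow_le_of_le_one (by norm_num) (by norm_num) hm₀
    _ ≤ 2⁻¹ * C⁻¹ ^ (k + m) * (2 * C ^ (k + m) * D) := by gcongr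
    _ = (C⁻¹ * C) ^ (k + m) * D := by ring
    _ = D := by rw [inv_mul_cancel₀ hC₀.ne', one_pow, one_mul]

/-- If the projective (normalized) action of the semigroup generated by a finite
family of invertible matrices satisfies exponential separation at some unit
vector `x` for words with distinct first letters, then the family is strongly
Diophantine with the explicit constant `2⁻¹ C₁⁻¹ C₂⁻³ c`. -/
theorem strongly_diophantine_of_exponential_separation
    (d : ℕ) {Λ : Type*} [Fintype Λ] [Nonempty Λ]
    (A : Λ → (EuclideanSpace ℝ (Fin (d + 1)) →L[ℝ] EuclideanSpace ℝ (Fin (d + 1)))ˣ)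
    (C₁ C₂ : ℝ)
    (hC₁ : C₁ = Finset.univ.sup' Finset.univ_nonempty (fun i => max 1
      ‖(A i : EuclideanSpace ℝ (Fin (d + 1)) →L[ℝ] EuclideanSpace ℝ (Fin (d + 1)))‖))
    (hC₂ : C₂ = Finset.univ.sup' Finset.univ_nonempty (fun i => max 1
      ‖(((A i)⁻¹ : _ˣ) : EuclideanSpace ℝ (Fin (d + 1)) →L[ℝ] EuclideanSpace ℝ (Fin (d + 1)))‖))
    (c : ℝ) (hc : c ∈ Set.Ioo (0 : ℝ) 1)
    (x : EuclideanSpace ℝ (Fin (d + 1))) (hx : ‖x‖ = 1)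
    (hsep : ∀ n : ℕ, ∀ u v : List Λ, u.length = n → v.length = n →
      u.head? ≠ v.head? →
      c ^ n ≤ ‖(‖(wordProd A u : _ˣ).val x‖⁻¹ • (wordProd A u : _ˣ).val x) -
        (‖(wordProd A v : _ˣ).val x‖⁻¹ • (wordProd A v : _ˣ).val x)‖) :
    ∀ n : ℕ, ∀ i j : List Λ, i.length = n → j.length = n → i ≠ j →
      (2⁻¹ * C₁⁻¹ * C₂⁻¹ ^ 3 * c) ^ n ≤
        ‖(wordProd A i : _ˣ).val - (wordProd A j : _ˣ).val‖ := by
  rintro n i j rfl hj hne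
  obtain ⟨hc₀, hc₁⟩ := hc
  have one_le_C₁ : 1 ≤ C₁ :=
    hC₁ ▸ Finset.le_sup'_of_le _ (Finset.mem_univ (Classical.arbitrary Λ)) (le_max_left _ _)
  have one_le_C₂ : 1 ≤ C₂ :=
    hC₂ ▸ Finset.le_sup'_of_le _ (Finset.mem_univ (Classical.arbitrary Λ)) (le_max_left _ _)
  have hA : ∀ i, ‖(↑(A i)⁻¹ :
      EuclideanSpace ℝ (Fin (d + 1)) →L[ℝ] EuclideanSpace ℝ (Fin (d + 1)))‖ ≤ C₂ := fun i =>
    hC₂ ▸ Finset.le_sup'_of_le _ (Finset.mem_univ i) (le_max_right _ _)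
  obtain ⟨m, hm₀, hmi, hD⟩ := exists_pow_le_two_mul_pow_mul_norm_wordProd_sub A hA hx
    (fun u v huv hhead => hsep _ u v rfl huv.symm hhead) hj.symm hne
  have hC₁₀ : 0 < C₁ := by linarith
  have hC₂₀ : 0 < C₂ := by linarith
  refine pow_le_of_pow_le_two_mul_pow_mul one_le_C₂ hc₁.le (by positivity) ?_ hm₀ hmi hD
  calc 2⁻¹ * C₁⁻¹ * C₂⁻¹ ^ 3 * c = C₁⁻¹ * C₂⁻¹ ^ 2 * (2⁻¹ * C₂⁻¹ * c) := by ring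
    _ ≤ 1 * (2⁻¹ * C₂⁻¹ * c) := by
        gcongr
        exact mul_le_one₀ (inv_le_one_of_one_le₀ one_le_C₁) (by positivity)
          (pow_le_one₀ (by positivity) (inv_le_one_of_one_le₀ one_le_C₂))
    _ = 2⁻¹ * C₂⁻¹ * c := one_mul _
end
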